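/- arXiv:1107.3268 — 5 statements merged into one kernel-verified Lean document; each statement's English description precedes it below -/
import Mathlib

section
/- Define θ(α, i) as: wt_{i,n+1}(α) + i/2 if i even, wt_{i,n+1}(α) + (i-1)/2 + α(n+1) if i odd. For any α, β ∈ F_2^{n+1} with α ⊕ β = e ⊕ e_i ⊕ e_j (1 ≤ i < j ≤ n), it holds that θ(α,i) + θ(β,i) + θ(α,j) + θ(β,j) ≡ 1 (mod 2). -/
open Finset

/-- The `i`-th standard basis vector of `F_2^{n+1}`. -/
def unitV (n : ℕ) (i : Fin (n+1)) : Fin (n+1) → ZMod 2 :=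
  fun j => if j = i then 1 else 0

/-- The all-ones vector of `F_2^{n+1}`. -/
def onesV (n : ℕ) : Fin (n+1) → ZMod 2 := fun _ => 1

/-- `φ(α, i) = α ⊕ α(n+1)·e ⊕ e_i`. -/
def phiV (n : ℕ) (α : Fin (n+1) → ZMod 2) (i : Fin (n+1)) :
    Fin (n+1) → ZMod 2 :=
  α + α (Fin.last n) • onesV n + unitV n i

/-- `wt_{s,t}(α)`, the number of ones among coordinates `s,…,t`. -/
def wtIcc (n : ℕ) (α : Fin (n+1) → ZMod 2) (s t : Fin (n+1)) : ℕ :=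
  ∑ l ∈ Finset.Icc s t, (α l).val

/-- Hamming weight. -/
def wtV (n : ℕ) (α : Fin (n+1) → ZMod 2) : ℕ := ∑ l, (α l).val

/-- `θ(α,i)`: with the 1-based position of index `i : Fin (n+1)` being `i.1 + 1`,
`θ(α,i) = wt_{i,n+1}(α) + i/2` for even `i`, and
`θ(α,i) = wt_{i,n+1}(α) + (i-1)/2 + α(n+1)` for odd `i`. -/
def thetaV (n : ℕ) (α : Fin (n+1) → ZMod 2) (i : Fin (n+1)) : ℤ :=
  if (i.1 + 1) % 2 = 0 then
    (wtIcc n α i (Fin.last n) : ℤ) + ((i.1 + 1) / 2 : ℕ)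
  else
    (wtIcc n α i (Fin.last n) : ℤ) + ((i.1 : ℕ) / 2 : ℕ) + ((α (Fin.last n)).val : ℕ)

/-! Modulo 2 the index terms `i/2`, `(i-1)/2` of `θ(α,k)` and `θ(β,k)` cancel in pairs, so with
`γ = α ⊕ β` and `p` the 1-based position of `k`,
`θ(α,k) + θ(β,k) ≡ wt_{p,n+1}(γ) + p·γ(n+1)`.
For `γ = e ⊕ e_i ⊕ e_j` with `i < j ≤ n`, `γ` vanishes exactly at `i` and `j`, so
`wt_{p,n+1}(γ) = n + 2 - p - m` with `m = 2` at `i` and `m = 1` at `j`, while `γ(n+1) = 1`;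
each pair then contributes `n + m`, and the total is `2n + 3 ≡ 1`. -/

lemma natCast_wtIcc (n : ℕ) (α : Fin (n+1) → ZMod 2) (s t : Fin (n+1)) :
    (wtIcc n α s t : ZMod 2) = ∑ l ∈ Icc s t, α l := by
  simp only [wtIcc, Nat.cast_sum, ZMod.natCast_zmod_val]

lemma intCast_thetaV_add_intCast_thetaV (n : ℕ) (α β : Fin (n+1) → ZMod 2) (k : Fin (n+1)) :
    (thetaV n α k : ZMod 2) + thetaV n β k
      = ∑ l ∈ Icc k (Fin.last n), (α + β) l + ((k : ℕ) + 1 : ZMod 2) * (α + β) (Fin.last n) := by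
  have hk : ((k : ℕ) + 1 : ZMod 2) = (((k : ℕ) + 1) % 2 : ℕ) := by
    rw [ZMod.natCast_mod]; push_cast; rfl
  have two : (2 : ZMod 2) = 0 := rfl
  simp only [Pi.add_apply, sum_add_distrib, thetaV]
  split_ifs with hpar
  · simp only [Int.cast_add, Int.cast_natCast, natCast_wtIcc]
    rw [hk, hpar]
    linear_combination (((k + 1) / 2 : ℕ) : ZMod 2) * two
  · rw [Nat.mod_two_ne_zero.mp hpar] at hk
    simp only [Int.cast_add, Int.cast_natCast, natCast_wtIcc, ZMod.natCast_zmod_val]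
    rw [hk]
    linear_combination (((k : ℕ) / 2 : ℕ) : ZMod 2) * two

lemma sum_onesV_add_unitV_add_unitV (n : ℕ) (i j : Fin (n+1)) (S : Finset (Fin (n+1))) :
    ∑ l ∈ S, (onesV n + unitV n i + unitV n j) l
      = #S + (if i ∈ S then 1 else 0) + (if j ∈ S then 1 else 0) := by
  simp [sum_add_distrib, onesV, unitV, sum_ite_eq']

/-- if `α ⊕ β = e ⊕ e_i ⊕ e_j` with `1 ≤ i < j ≤ n`, then
`θ(α,i) + θ(β,i) + θ(α,j) + θ(β,j) ≡ 1 (mod 2)`. -/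
theorem stmt4 (n : ℕ) (i j : Fin (n+1)) (hij : i < j) (hj : j ≠ Fin.last n)
    (α β : Fin (n+1) → ZMod 2)
    (h : α + β = onesV n + unitV n i + unitV n j) :
    thetaV n α i + thetaV n β i + thetaV n α j + thetaV n β j ≡ 1 [ZMOD 2] := by
  have hjlast : j < Fin.last n := lt_of_le_of_ne (Fin.le_last j) hj
  have hγlast : (α + β) (Fin.last n) = 1 := by
    rw [h]
    simp [onesV, unitV, (hij.trans hjlast).ne', hjlast.ne']
  have hcard (k : Fin (n+1)) : (#(Icc k (Fin.last n)) : ZMod 2) = n + 1 - k := by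
    rw [Fin.card_Icc, Fin.val_last, Nat.cast_sub (by omega)]
    push_cast; ring
  refine (ZMod.intCast_eq_intCast_iff _ _ 2).mp ?_
  push_cast
  rw [add_assoc (_ + _), intCast_thetaV_add_intCast_thetaV, intCast_thetaV_add_intCast_thetaV, hγlast, h,
    sum_onesV_add_unitV_add_unitV, sum_onesV_add_unitV_add_unitV, hcard, hcard]
  have two : (2 : ZMod 2) = 0 := rfl
  simp only [mem_Icc, le_rfl, hij.le, hij.not_ge, Fin.le_last, and_self, and_true,
    if_true, if_false]
  linear_combination ((n : ZMod 2) + 3) * two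
end

section
/- Let n ≥ 1 and define the 2^{n+1} × n matrix G_n over the polynomial-like ring of complex variables z_γ (γ ∈ F_2^{n+1} with last bit 0, identified with F_2^n) and their conjugates, by: G_n(α, i) = 0 if α(i) = 0; G_n(α, i) = (-1)^{θ(α,i)} z_{φ(α,i)} if α(i) = 1 and α(n+1) = 0; G_n(α, i) = (-1)^{θ(α,i)} z*_{φ(α,i)} if α(i) = 1 and α(n+1) = 1. Then for any two distinct columns i ≠ j, Σ_{α ∈ F_2^{n+1}} G_n(α, i)* · G_n(α, j) = 0, i.e., the columns of G_n are pairwise orthogonal. -/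
open Finset

/-- The entry of the matrix `G_n` on row `α` and column `i`, as a formal complex
function of an assignment `z` of the variables. -/
noncomputable def Gmat (n : ℕ) (z : (Fin (n+1) → ZMod 2) → ℂ)
    (α : Fin (n+1) → ZMod 2) (i : Fin (n+1)) : ℂ :=
  if α i = 0 then 0
  else if α (Fin.last n) = 0 then
    (-1 : ℂ) ^ thetaV n α i * z (phiV n α i)
  else
    (-1 : ℂ) ^ thetaV n α i * (starRingEnd ℂ) (z (phiV n α i))

/-!
Pair each row `α` with `α ⊕ e ⊕ e_i ⊕ e_j`. This involution keeps the coordinates `i` and `j`,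
flips the last one and exchanges `φ(·, i)` with `φ(·, j)`, so the two rows contribute the same
monomial `z*_{φ(α,i)} z_{φ(α,j)}` to the column product. Only the signs differ: the two changes
`θ(α ⊕ e ⊕ e_i ⊕ e_j, k) - θ(α, k)` for `k = i, j` are `n + 1 + [i ≤ j]` and `n + 1 + [j ≤ i]`
mod 2, whose sum is odd, so the contributions cancel.
-/

lemma neg_one_zpow_mul_neg_one_zpow_of_odd {R : Type*} [DivisionRing R] {a b c d : ℤ}
    (h : Odd (a - c + (b - d))) :
    (-1 : R) ^ a * (-1 : R) ^ b = -((-1 : R) ^ c * (-1 : R) ^ d) := by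
  have hne : (-1 : R) ≠ 0 := neg_ne_zero.mpr one_ne_zero
  rw [← zpow_add₀ hne, ← zpow_add₀ hne, show a + b = a - c + (b - d) + (c + d) by ring,
    zpow_add₀ hne, h.neg_one_zpow, neg_one_mul]

lemma wtIcc_add_emod (n : ℕ) (α β : Fin (n+1) → ZMod 2) (s t : Fin (n+1)) :
    wtIcc n (α + β) s t % 2 = (wtIcc n α s t + wtIcc n β s t) % 2 := by
  unfold wtIcc
  rw [sum_nat_mod, ← sum_add_distrib, sum_nat_mod (Icc s t) 2 (fun l => (α l).val + (β l).val)]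
  refine congrArg (· % 2) (sum_congr rfl fun l _ => ?_)
  rw [Pi.add_apply, ZMod.val_add, Nat.mod_mod_of_dvd _ dvd_rfl]

lemma wtIcc_onesV (n : ℕ) (s t : Fin (n+1)) : wtIcc n (onesV n) s t = t + 1 - s := by
  simp [wtIcc, onesV, ZMod.val_one, Fin.card_Icc]

lemma wtIcc_unitV (n : ℕ) (k s t : Fin (n+1)) :
    wtIcc n (unitV n k) s t = if k ∈ Icc s t then 1 else 0 := by
  have hval : ∀ l, (unitV n k l).val = if l = k then 1 else 0 := fun l => by
    by_cases h : l = k <;> simp [unitV, h, ZMod.val_one]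
  simp only [wtIcc, hval, sum_ite_eq']

lemma thetaV_sub_thetaV (n : ℕ) (α β : Fin (n+1) → ZMod 2) (i : Fin (n+1)) :
    thetaV n β i - thetaV n α i = (wtIcc n β i (Fin.last n) : ℤ) - wtIcc n α i (Fin.last n)
      + if (i.1 + 1) % 2 = 0 then 0
        else ((β (Fin.last n)).val : ℤ) - (α (Fin.last n)).val := by
  unfold thetaV
  split_ifs <;> ring

def pairVec (n : ℕ) (i j : Fin (n+1)) : Fin (n+1) → ZMod 2 :=
  onesV n + unitV n i + unitV n j

lemma pairVec_comm (n : ℕ) (i j : Fin (n+1)) : pairVec n i j = pairVec n j i := by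
  simp only [pairVec, add_assoc, add_comm (unitV n i)]

section pairVec

variable {n : ℕ} {i j : Fin (n+1)}

lemma pairVec_apply_left (hij : i ≠ j) : pairVec n i j i = 0 := by
  simp [pairVec, onesV, unitV, hij, CharTwo.add_self_eq_zero]

lemma pairVec_apply_last (hi : i ≠ Fin.last n) (hj : j ≠ Fin.last n) :
    pairVec n i j (Fin.last n) = 1 := by
  simp [pairVec, onesV, unitV, hi.symm, hj.symm]

lemma wtIcc_pairVec_emod (s : Fin (n+1)) :
    wtIcc n (pairVec n i j) s (Fin.last n) % 2
      = (n + 1 - s + (if s ≤ i then 1 else 0) + (if s ≤ j then 1 else 0)) % 2 := by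
  have hj := wtIcc_add_emod n (onesV n + unitV n i) (unitV n j) s (Fin.last n)
  have hi := wtIcc_add_emod n (onesV n) (unitV n i) s (Fin.last n)
  simp only [wtIcc_onesV, wtIcc_unitV, mem_Icc, Fin.le_last, and_true, Fin.val_last] at hi hj
  rw [pairVec]
  omega

lemma phiV_add_pairVec (α : Fin (n+1) → ZMod 2) (hi : i ≠ Fin.last n) (hj : j ≠ Fin.last n) :
    phiV n (α + pairVec n i j) i = phiV n α j := by
  funext l
  simp only [phiV, pairVec, Pi.add_apply, Pi.smul_apply, onesV, unitV, smul_eq_mul, mul_one,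
    if_neg hi.symm, if_neg hj.symm]
  generalize α l = a, α (Fin.last n) = b
  split_ifs <;> revert a b <;> decide

lemma thetaV_add_pairVec_sub_emod (α : Fin (n+1) → ZMod 2)
    (hi : i ≠ Fin.last n) (hj : j ≠ Fin.last n) :
    (thetaV n (α + pairVec n i j) i - thetaV n α i) % 2 = (n + 1 + if i ≤ j then 1 else 0) % 2 := by
  have hwt := wtIcc_add_emod n α (pairVec n i j) i (Fin.last n)
  have hd := wtIcc_pairVec_emod (i := i) (j := j) i
  have hlast : ((α + pairVec n i j) (Fin.last n)).val + (α (Fin.last n)).val = 1 := by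
    rw [Pi.add_apply, pairVec_apply_last hi hj]
    generalize α (Fin.last n) = a
    revert a; decide
  rw [if_pos le_rfl] at hd
  rw [thetaV_sub_thetaV]
  split_ifs at hd ⊢ <;> omega

lemma neg_one_zpow_thetaV_add_pairVec (α : Fin (n+1) → ZMod 2)
    (hi : i ≠ Fin.last n) (hj : j ≠ Fin.last n) (hij : i ≠ j) :
    (-1 : ℂ) ^ thetaV n (α + pairVec n i j) i * (-1 : ℂ) ^ thetaV n (α + pairVec n i j) j
      = -((-1 : ℂ) ^ thetaV n α i * (-1 : ℂ) ^ thetaV n α j) := by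
  apply neg_one_zpow_mul_neg_one_zpow_of_odd
  have hΔi := thetaV_add_pairVec_sub_emod α hi hj
  have hΔj := thetaV_add_pairVec_sub_emod α hj hi
  rw [← pairVec_comm] at hΔj
  rw [Int.odd_iff]
  rcases lt_or_gt_of_ne hij with hlt | hlt
  · rw [if_pos hlt.le] at hΔi
    rw [if_neg hlt.not_ge] at hΔj
    omega
  · rw [if_neg hlt.not_ge] at hΔi
    rw [if_pos hlt.le] at hΔj
    omega

end pairVec

section columnProduct

variable {n : ℕ} {i j : Fin (n+1)} (z : (Fin (n+1) → ZMod 2) → ℂ)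

lemma conj_Gmat_mul_Gmat_add_pairVec_of_last_eq_zero (hi : i ≠ Fin.last n)
    (hj : j ≠ Fin.last n) (hij : i ≠ j) {α : Fin (n+1) → ZMod 2} (hα : α (Fin.last n) = 0) :
    (starRingEnd ℂ) (Gmat n z (α + pairVec n i j) i) * Gmat n z (α + pairVec n i j) j
      = -((starRingEnd ℂ) (Gmat n z α i) * Gmat n z α j) := by
  have hβi : (α + pairVec n i j) i = α i := by rw [Pi.add_apply, pairVec_apply_left hij, add_zero]
  have hβj : (α + pairVec n i j) j = α j := by
    rw [Pi.add_apply, pairVec_comm, pairVec_apply_left hij.symm, add_zero]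
  by_cases hαi : α i = 0
  · simp [Gmat, hαi, hβi]
  by_cases hαj : α j = 0
  · simp [Gmat, hαj, hβj]
  have hβlast : (α + pairVec n i j) (Fin.last n) ≠ 0 := by
    rw [Pi.add_apply, hα, pairVec_apply_last hi hj]; decide
  have hsign := neg_one_zpow_thetaV_add_pairVec α hi hj hij
  simp only [Gmat, hβi, hβj, if_neg hαi, if_neg hαj, if_pos hα, if_neg hβlast,
    phiV_add_pairVec α hi hj, pairVec_comm n i j ▸ phiV_add_pairVec α hj hi,
    map_mul, map_zpow₀, map_neg, map_one, Complex.conj_conj]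
  linear_combination ((starRingEnd ℂ) (z (phiV n α i)) * z (phiV n α j)) * hsign

lemma conj_Gmat_mul_Gmat_add_pairVec (hi : i ≠ Fin.last n) (hj : j ≠ Fin.last n) (hij : i ≠ j)
    (α : Fin (n+1) → ZMod 2) :
    (starRingEnd ℂ) (Gmat n z (α + pairVec n i j) i) * Gmat n z (α + pairVec n i j) j
      = -((starRingEnd ℂ) (Gmat n z α i) * Gmat n z α j) := by
  rcases (by decide : ∀ a : ZMod 2, a = 0 ∨ a = 1) (α (Fin.last n)) with hα | hα
  · exact conj_Gmat_mul_Gmat_add_pairVec_of_last_eq_zero z hi hj hij hα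
  · have hβ : (α + pairVec n i j) (Fin.last n) = 0 := by
      rw [Pi.add_apply, hα, pairVec_apply_last hi hj]; decide
    have h := conj_Gmat_mul_Gmat_add_pairVec_of_last_eq_zero z hi hj hij hβ
    rw [CharTwo.add_cancel_right] at h
    rw [h, neg_neg]

end columnProduct

theorem stmt5_general (n : ℕ) (i j : Fin (n+1))
    (hi : i ≠ Fin.last n) (hj : j ≠ Fin.last n) (hij : i ≠ j)
    (z : (Fin (n+1) → ZMod 2) → ℂ) :
    ∑ α : Fin (n+1) → ZMod 2,
      (starRingEnd ℂ) (Gmat n z α i) * Gmat n z α j = 0 := by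
  have hpair := Equiv.sum_comp (Equiv.addRight (pairVec n i j))
    fun α => (starRingEnd ℂ) (Gmat n z α i) * Gmat n z α j
  simp only [Equiv.coe_addRight, conj_Gmat_mul_Gmat_add_pairVec z hi hj hij,
    sum_neg_distrib] at hpair
  exact neg_eq_self.mp hpair

/-- any two distinct columns of `G_n` are orthogonal. -/
theorem stmt5 (n : ℕ) (hn : 1 ≤ n) (i j : Fin (n+1))
    (hi : i ≠ Fin.last n) (hj : j ≠ Fin.last n) (hij : i ≠ j)
    (z : (Fin (n+1) → ZMod 2) → ℂ) :
    ∑ α : Fin (n+1) → ZMod 2,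
      (starRingEnd ℂ) (Gmat n z α i) * Gmat n z α j = 0 :=
  stmt5_general n i j hi hj hij z
end

section
/- Let n = 2m with m even, and let H_n be the 2^n × n matrix whose first n-1 columns are those of G_{n-1} (indexed by α ∈ F_2^n) and whose last column is L_n(α) = α(n)·(-1)^{ψ(α)} z_{α ⊕ e_n}, where ψ(α) = Σ_{i=1}^{m} α(2i). Then the last column of H_n is orthogonal to each of the first n-1 columns: for each 1 ≤ i ≤ n-1, Σ_α H_n(α, i)* · L_n(α) = 0. -/
/-!
Translation by `c = e + e_i + e_n` is an involution of `F_2^n` that fixes `α(i)` and `α(n)`, and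
when `α(i) = α(n) = 1` it swaps the two `z`-factors `z_{φ(α,i)} = z_{α ⊕ c ⊕ e_n}` and `z_{α ⊕ e_n}`
of the summand. If `i` sits at (1-based) position `p`, then modulo 2 the translation changes `θ`
by the number `n - p + 1 ≡ p + 1` of ones of `c` in positions `p, …, n` (as `n` is even), and `ψ`
by `m + [p even] + 1 ≡ [p even] + 1` (as `m` is even). Since `p + [p even]` is odd, the summand
changes sign, so the sum equals its own negative.
-/

open Finset

/-- `ψ(α) = Σ_{k=1}^{m} α(2k)`, the number of ones of `α` in even (1-based) positions. -/
def psiV (n : ℕ) (α : Fin (n+1) → ZMod 2) : ℕ :=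
  ∑ l ∈ Finset.univ.filter (fun l : Fin (n+1) => (l.1 + 1) % 2 = 0), (α l).val

/-- The padded last column `L_n(α) = α(n)·(-1)^{ψ(α)} z_{α ⊕ e_n}`. -/
noncomputable def Lcol (n : ℕ) (z : (Fin (n+1) → ZMod 2) → ℂ)
    (α : Fin (n+1) → ZMod 2) : ℂ :=
  if α (Fin.last n) = 1 then
    (-1 : ℂ) ^ psiV n α * z (α + unitV n (Fin.last n))
  else 0

lemma natCast_sum_val_zmod_two {ι : Type*} (s : Finset ι) (f : ι → ZMod 2) :
    ((∑ l ∈ s, (f l).val : ℕ) : ZMod 2) = ∑ l ∈ s, f l := by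
  push_cast [ZMod.natCast_val, ZMod.cast_id]
  rfl

lemma neg_one_zpow_eq_neg_of_intCast_eq {R : Type*} [DivisionRing R] {a b : ℤ}
    (h : (a : ZMod 2) = b + 1) : (-1 : R) ^ a = -(-1 : R) ^ b := by
  have hodd : Odd (a - b) := by
    rw [← ZMod.intCast_eq_one_iff_odd]; push_cast; rw [h]; ring
  rw [show a = b + (a - b) by ring, zpow_add₀ (neg_ne_zero.2 one_ne_zero), hodd.neg_one_zpow,
    mul_neg_one]

lemma card_filter_succ_even (N : ℕ) : #{l : Fin N | (l.1 + 1) % 2 = 0} = N / 2 := by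
  rw [← Nat.card_multiples, card_filter, card_filter,
    Fin.sum_univ_eq_sum_range (fun k => if (k + 1) % 2 = 0 then 1 else 0)]
  simp only [Nat.dvd_iff_mod_eq_zero]

section
variable {n : ℕ}

lemma thetaV_add_intCast (α v : Fin (n+1) → ZMod 2) (i : Fin (n+1)) (hv : v (Fin.last n) = 0) :
    (thetaV n (α + v) i : ZMod 2) = thetaV n α i + ∑ l ∈ Icc i (Fin.last n), v l := by
  unfold thetaV wtIcc
  split_ifs <;>
  · simp only [Int.cast_add, Int.cast_natCast, natCast_sum_val_zmod_two, Pi.add_apply, hv,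
      add_zero, sum_add_distrib]
    ring

lemma psiV_add_natCast (α v : Fin (n+1) → ZMod 2) :
    (psiV n (α + v) : ZMod 2)
      = psiV n α + ∑ l ∈ univ.filter (fun l : Fin (n+1) => (l.1 + 1) % 2 = 0), v l := by
  simp only [psiV, natCast_sum_val_zmod_two, Pi.add_apply, sum_add_distrib]

end

def pairingShift (n : ℕ) (i : Fin (n+1)) : Fin (n+1) → ZMod 2 :=
  onesV n + unitV n i + unitV n (Fin.last n)

section
variable {m n : ℕ} {i : Fin (n+1)}

lemma sum_pairingShift (s : Finset (Fin (n+1))) :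
    ∑ l ∈ s, pairingShift n i l
      = #s + (if i ∈ s then 1 else 0) + (if Fin.last n ∈ s then 1 else 0) := by
  simp [pairingShift, onesV, unitV, sum_add_distrib]

lemma pairingShift_apply_self (hi : i ≠ Fin.last n) : pairingShift n i i = 0 := by
  simp [pairingShift, onesV, unitV, hi]
  decide

lemma pairingShift_apply_last (hi : i ≠ Fin.last n) : pairingShift n i (Fin.last n) = 0 := by
  simp [pairingShift, onesV, unitV, hi.symm]
  decide

lemma intCast_thetaV_add_psiV_add_pairingShift (hm : Even m) (hn : n + 1 = 2 * m)
    (hi : i ≠ Fin.last n) (α : Fin (n+1) → ZMod 2) :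
    ((thetaV n (α + pairingShift n i) i + psiV n (α + pairingShift n i) : ℤ) : ZMod 2)
      = ((thetaV n α i + psiV n α : ℤ) : ZMod 2) + 1 := by
  have hIcc : (#(Icc i (Fin.last n)) : ZMod 2) = i.val := by
    have hsize : ((n + 1 : ℕ) : ZMod 2) = 0 := by
      rw [hn, ZMod.natCast_eq_zero_iff_even]
      exact even_two_mul m
    rw [Fin.card_Icc, Fin.val_last, Nat.cast_sub i.isLt.le, hsize, zero_sub,
      ZMod.neg_eq_self_mod_two]
  have hevens : (#{l : Fin (n+1) | (l.1 + 1) % 2 = 0} : ZMod 2) = 0 := by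
    rw [card_filter_succ_even, hn, Nat.mul_div_cancel_left m two_pos]
    exact ZMod.natCast_eq_zero_iff_even.2 hm
  have hi_parity : (i.val : ZMod 2) + (if (i.val + 1) % 2 = 0 then 1 else 0) = 0 := by
    rcases Nat.even_or_odd i.val with he | ho
    · rw [ZMod.natCast_eq_zero_iff_even.2 he, if_neg (by rw [Nat.even_iff] at he; omega)]
      rfl
    · rw [ZMod.natCast_eq_one_iff_odd.2 ho, if_pos (by rw [Nat.odd_iff] at ho; omega)]
      rfl
  push_cast
  rw [thetaV_add_intCast _ _ _ (pairingShift_apply_last hi), psiV_add_natCast,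
    sum_pairingShift, sum_pairingShift, hIcc, hevens]
  simp only [mem_Icc, le_refl, Fin.le_last, and_self, if_true, mem_filter, mem_univ, true_and,
    Fin.val_last, if_pos (show (n + 1) % 2 = 0 by omega)]
  have h2 : (2 : ZMod 2) = 0 := rfl
  linear_combination hi_parity + h2

lemma phiV_of_last_eq_one {α : Fin (n+1) → ZMod 2} (hα : α (Fin.last n) = 1) :
    phiV n α i = α + pairingShift n i + unitV n (Fin.last n) := by
  rw [phiV, hα, one_smul, pairingShift, ← add_assoc, ← add_assoc, add_assoc _ (unitV n _),
    CharTwo.add_self_eq_zero, add_zero, add_assoc]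

lemma conj_Gmat_mul_Lcol_add_pairingShift (hm : Even m) (hn : n + 1 = 2 * m)
    (hi : i ≠ Fin.last n) (z : (Fin (n+1) → ZMod 2) → ℂ) (α : Fin (n+1) → ZMod 2) :
    starRingEnd ℂ (Gmat n z (α + pairingShift n i) i) * Lcol n z (α + pairingShift n i)
      = -(starRingEnd ℂ (Gmat n z α i) * Lcol n z α) := by
  have hαi : (α + pairingShift n i) i = α i := by
    rw [Pi.add_apply, pairingShift_apply_self hi, add_zero]
  have hαlast : (α + pairingShift n i) (Fin.last n) = α (Fin.last n) := by
    rw [Pi.add_apply, pairingShift_apply_last hi, add_zero]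
  by_cases hi0 : α i = 0
  · simp [Gmat, hαi, hi0]
  by_cases hlast : α (Fin.last n) = 1
  swap
  · simp [Lcol, hαlast, hlast]
  have hφ : phiV n (α + pairingShift n i) i = α + unitV n (Fin.last n) := by
    rw [phiV_of_last_eq_one (hαlast.trans hlast), add_assoc α, CharTwo.add_self_eq_zero,
      add_zero]
  simp only [Gmat, Lcol, hαi, hαlast, hi0, hlast, one_ne_zero, if_false, if_true, map_mul,
    map_zpow₀, map_neg, map_one, Complex.conj_conj, hφ, phiV_of_last_eq_one hlast]
  have hsign := neg_one_zpow_eq_neg_of_intCast_eq (R := ℂ)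
    (intCast_thetaV_add_psiV_add_pairingShift hm hn hi α)
  rw [zpow_add₀ (neg_ne_zero.2 one_ne_zero), zpow_add₀ (neg_ne_zero.2 one_ne_zero),
    zpow_natCast, zpow_natCast] at hsign
  linear_combination (z (α + pairingShift n i + unitV n (Fin.last n)) *
    z (α + unitV n (Fin.last n))) * hsign

end

/-- for `n = 2m` with `m` even, the padded column `L_n` is orthogonal
to every column of `G_{n-1}`. -/
theorem stmt10 (m n : ℕ) (hm : Even m) (hn : n + 1 = 2 * m)
    (i : Fin (n+1)) (hi : i ≠ Fin.last n)
    (z : (Fin (n+1) → ZMod 2) → ℂ) :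
    ∑ α : Fin (n+1) → ZMod 2,
      (starRingEnd ℂ) (Gmat n z α i) * Lcol n z α = 0 := by
  have hshift := Equiv.sum_comp (Equiv.addRight (pairingShift n i))
    fun α => starRingEnd ℂ (Gmat n z α i) * Lcol n z α
  simp only [Equiv.coe_addRight, conj_Gmat_mul_Lcol_add_pairingShift hm hn hi,
    sum_neg_distrib] at hshift
  exact self_eq_neg.mp hshift.symm
end

section
/- Let n = 2m with m even, and let α, β ∈ F_2^n with α ⊕ β = e ⊕ e_i ⊕ e_n for some odd i with 1 ≤ i ≤ n-1. Then θ(α,i) + ψ(α) + θ(β,i) + ψ(β) ≡ 1 (mod 2), where θ(α,i) = wt_{i,n}(α) + (i-1)/2 + α(n) and ψ(α) = Σ_{k=1}^{m} α(2k). -/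
/-!
Modulo 2, `θ(α,i) + θ(β,i)` and `ψ(α) + ψ(β)` depend only on `γ = α ⊕ β`, because the two
`(i-1)/2` terms cancel. For `γ = e ⊕ e_i ⊕ e_n` the window `i,…,n` has the even length
`n - i + 1` and contains both `i` and `n`, so `wt_{i,n}(γ)` is even, and `γ(n) = 0`;
while `ψ(γ) = m + 1` is odd, as `e` has `m` ones in even positions, `i` is odd and `n` is even.
-/

open Finset

lemma card_filter_even_position (k : ℕ) :
    #{l : Fin k | (l.1 + 1) % 2 = 0} = k / 2 := by
  rw [card_filter, Fin.sum_univ_eq_sum_range (fun l => if (l + 1) % 2 = 0 then 1 else 0),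
    ← card_filter, ← Nat.card_multiples]
  simp only [Nat.dvd_iff_mod_eq_zero]

lemma sum_onesV (n : ℕ) (s : Finset (Fin (n+1))) : ∑ l ∈ s, onesV n l = #s := by
  simp [onesV]

lemma sum_unitV_of_mem {n : ℕ} {i : Fin (n+1)} {s : Finset (Fin (n+1))} (hi : i ∈ s) :
    ∑ l ∈ s, unitV n i l = 1 := by
  simp [unitV, hi]

lemma sum_unitV_of_notMem {n : ℕ} {i : Fin (n+1)} {s : Finset (Fin (n+1))} (hi : i ∉ s) :
    ∑ l ∈ s, unitV n i l = 0 := by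
  simp [unitV, hi]

lemma intCast_thetaV_of_odd (n : ℕ) (α : Fin (n+1) → ZMod 2) (i : Fin (n+1))
    (hiodd : (i.1 + 1) % 2 = 1) :
    (thetaV n α i : ZMod 2) =
      ∑ l ∈ Icc i (Fin.last n), α l + (i.1 / 2 : ℕ) + α (Fin.last n) := by
  rw [thetaV, if_neg (by omega), wtIcc]
  push_cast [ZMod.natCast_zmod_val]
  rfl

lemma intCast_thetaV_add_thetaV_of_odd (n : ℕ) (α β : Fin (n+1) → ZMod 2) (i : Fin (n+1))
    (hiodd : (i.1 + 1) % 2 = 1) :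
    ((thetaV n α i + thetaV n β i : ℤ) : ZMod 2) =
      ∑ l ∈ Icc i (Fin.last n), (α + β) l + (α + β) (Fin.last n) := by
  push_cast [intCast_thetaV_of_odd n _ i hiodd, Pi.add_apply, sum_add_distrib]
  linear_combination (i.1 / 2 : ℕ) * CharTwo.add_self_eq_zero (1 : ZMod 2)

lemma natCast_psiV_add_psiV (n : ℕ) (α β : Fin (n+1) → ZMod 2) :
    ((psiV n α + psiV n β : ℕ) : ZMod 2) =
      ∑ l : Fin (n+1) with (l.1 + 1) % 2 = 0, (α + β) l := by
  push_cast [psiV, ZMod.natCast_zmod_val, Pi.add_apply, sum_add_distrib]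
  rfl

section

variable {n : ℕ} {i : Fin (n+1)}

lemma sum_Icc_onesV_add_unitV_add_unitV_last (hn : Even (n + 1)) (hiodd : (i.1 + 1) % 2 = 1) :
    ∑ l ∈ Icc i (Fin.last n), (onesV n + unitV n i + unitV n (Fin.last n)) l = 0 := by
  have hcard : Even #(Icc i (Fin.last n)) := by
    rw [Fin.card_Icc, Fin.val_last, Nat.even_iff]
    rw [Nat.even_iff] at hn
    omega
  simp only [Pi.add_apply, sum_add_distrib]
  rw [sum_onesV, (ZMod.natCast_eq_zero_iff_even).mpr hcard,
    sum_unitV_of_mem (mem_Icc.mpr ⟨le_rfl, Fin.le_last i⟩),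
    sum_unitV_of_mem (mem_Icc.mpr ⟨Fin.le_last i, le_rfl⟩)]
  decide

lemma sum_even_position_onesV_add_unitV_add_unitV_last {m : ℕ} (hm : Even m) (hn : n + 1 = 2 * m)
    (hiodd : (i.1 + 1) % 2 = 1) :
    ∑ l : Fin (n+1) with (l.1 + 1) % 2 = 0,
      (onesV n + unitV n i + unitV n (Fin.last n)) l = 1 := by
  have hcard : #{l : Fin (n+1) | (l.1 + 1) % 2 = 0} = m := by
    rw [card_filter_even_position, hn, Nat.mul_div_cancel_left m two_pos]
  have hlast : Fin.last n ∈ ({l : Fin (n+1) | (l.1 + 1) % 2 = 0} : Finset _) := by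
    simp only [mem_filter, mem_univ, true_and, Fin.val_last]
    omega
  simp only [Pi.add_apply, sum_add_distrib]
  rw [sum_onesV, hcard, (ZMod.natCast_eq_zero_iff_even).mpr hm,
    sum_unitV_of_notMem (by simp [hiodd]), sum_unitV_of_mem hlast]
  decide

lemma onesV_add_unitV_add_unitV_last_apply_last (hi : i ≠ Fin.last n) :
    (onesV n + unitV n i + unitV n (Fin.last n)) (Fin.last n) = 0 := by
  simp only [Pi.add_apply, onesV, unitV, if_neg hi.symm]
  decide

end

/-- `n = 2m`, `m` even, `α ⊕ β = e ⊕ e_i ⊕ e_n`, `i` odd,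
`1 ≤ i ≤ n-1`.  Then `θ(α,i) + ψ(α) + θ(β,i) + ψ(β) ≡ 1 (mod 2)`. -/
theorem stmt12 (m n : ℕ) (hm : Even m) (hn : n + 1 = 2 * m)
    (i : Fin (n+1)) (hi : i ≠ Fin.last n) (hiodd : (i.1 + 1) % 2 = 1)
    (α β : Fin (n+1) → ZMod 2)
    (h : α + β = onesV n + unitV n i + unitV n (Fin.last n)) :
    thetaV n α i + (psiV n α : ℤ) + thetaV n β i + (psiV n β : ℤ) ≡ 1 [ZMOD 2] := by
  refine (ZMod.intCast_eq_intCast_iff _ _ 2).mp ?_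
  rw [show thetaV n α i + (psiV n α : ℤ) + thetaV n β i + (psiV n β : ℤ)
      = (thetaV n α i + thetaV n β i) + ((psiV n α + psiV n β : ℕ) : ℤ) by push_cast; ring,
    Int.cast_add, Int.cast_natCast, intCast_thetaV_add_thetaV_of_odd n α β i hiodd,
    natCast_psiV_add_psiV, h, sum_Icc_onesV_add_unitV_add_unitV_last (hn ▸ even_two_mul m) hiodd,
    sum_even_position_onesV_add_unitV_add_unitV_last hm hn hiodd,
    onesV_add_unitV_add_unitV_last_apply_last hi]
  decide
end

section
/- Let n = 2m with m odd, and suppose φ: F_2^n → {-1, 1} (defined on vectors with last bit 1, equivalently on all of F_2^n by composition with α ↦ α ⊕ e_n) satisfies: φ(α) = -φ(α ⊕ e_i ⊕ e_n) whenever i is odd (1 ≤ i ≤ n-1), and φ(α) = φ(α ⊕ e_i ⊕ e_n) whenever i is even, for all α in the domain where both sides are defined (i.e., α(i) = α(n) = 1 on one side appropriately). Then no such φ exists; more precisely, starting from α₀ = e_m ⊕ e_{m+1} ⊕ ⋯ ⊕ e_{2m-1}, one chain of relations yields φ(α₀) = (-1)^{(m+1)/2} φ(β) and another yields φ(α₀)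 = (-1)^{(m-1)/2} φ(β) for β = e_1 ⊕ e_3 ⊕ ⋯ ⊕ e_{2m-1}, a contradiction. -/
/-!
Index positions from `0`. Start from `α₀` with ones at the even positions and at the last position
`n - 1`, and apply the moves `α ↦ α + 𝟙 + e_t + e_{n-1}` for `t = 0, 1, …, n - 2`. Each move is
admissible, and after all `n - 1` of them the vector is `α₀ + (n - 1)(𝟙 + e_{n-1}) + (𝟙 + e_{n-1})
= α₀`, since `n` is even. Move `t` multiplies the sign by `(-1)^(t+1)`, so around the cycle
`φ(α₀) = (-1)^(1 + 2 + ⋯ + (n-1)) φ(α₀) = (-1)^(m(2m-1)) φ(α₀) = -φ(α₀)`, impossible for a sign.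
-/

/-- The `i`-th standard basis vector of `F_2^n`. -/
def unitF (n : ℕ) (i : Fin n) : Fin n → ZMod 2 := fun j => if j = i then 1 else 0

/-- The all-ones vector of `F_2^n`. -/
def onesF (n : ℕ) : Fin n → ZMod 2 := fun _ => 1

lemma eq_prod_mul_of_forall_lt_eq_mul {M : Type*} [CommMonoid M] (x s : ℕ → M) (N : ℕ)
    (h : ∀ t < N, x t = s t * x (t + 1)) : x 0 = (∏ t ∈ Finset.range N, s t) * x N := by
  induction N with
  | zero => simp
  | succ N ih =>
    rw [ih fun t ht => h t (by omega), h N (by omega), Finset.prod_range_succ, mul_assoc]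

lemma eq_neg_one_pow_mul_of_parity {a b : ℤ} (k : ℕ) (hodd : Odd k → a = -b)
    (heven : Even k → a = b) : a = (-1) ^ k * b := by
  rcases Nat.even_or_odd k with hk | hk
  · rw [hk.neg_one_pow, one_mul, heven hk]
  · rw [hk.neg_one_pow, neg_one_mul, hodd hk]

lemma prod_range_neg_one_pow_succ_of_odd {m : ℕ} (hm : Odd m) :
    ∏ t ∈ Finset.range (2 * m - 1), (-1 : ℤ) ^ (t + 1) = -1 := by
  have hm1 : 1 ≤ m := hm.pos
  have hsum : ∑ t ∈ Finset.range (2 * m - 1), (t + 1) = m * (2 * m - 1) := by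
    have gauss := Finset.sum_range_id_mul_two (2 * m - 1 + 1)
    rw [Finset.sum_range_succ', add_zero, Nat.add_sub_cancel, show 2 * m - 1 + 1 = 2 * m by omega,
      mul_assoc] at gauss
    omega
  have hodd : Odd (m * (2 * m - 1)) := hm.mul (Nat.Even.sub_odd (by omega) (even_two_mul m) odd_one)
  rw [Finset.prod_pow_eq_pow_sum, hsum, hodd.neg_one_pow]

/-- `α₀ + t (𝟙 + e_{n-1}) + (e_0 + ⋯ + e_{t-1})`, the vector reached after `t` moves, computed
through a natural-number lift so that identities between such vectors become parity arithmetic. -/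
def cycleVec (m t : ℕ) (p : Fin (2 * m)) : ZMod 2 :=
  (((if p.1 % 2 = 0 ∨ p.1 = 2 * m - 1 then 1 else 0) + t + (if p.1 < t then 1 else 0) +
    (if p.1 = 2 * m - 1 then t else 0) : ℕ) : ZMod 2)

section cycleVec

variable {m t : ℕ}

lemma cycleVec_succ (ht : t < 2 * m - 1) :
    cycleVec m (t + 1) = cycleVec m t + onesF (2 * m) + unitF (2 * m) ⟨t, by omega⟩ +
      unitF (2 * m) ⟨2 * m - 1, by omega⟩ := by
  funext p
  simp only [cycleVec, unitF, onesF, Pi.add_apply, Fin.ext_iff]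
  rw [← Nat.cast_one (R := ZMod 2), ← Nat.cast_zero (R := ZMod 2)]
  simp only [← apply_ite (Nat.cast (R := ZMod 2)), ← Nat.cast_add, ZMod.natCast_eq_natCast_iff']
  split_ifs <;> omega

lemma cycleVec_cycle : cycleVec m (2 * m - 1) = cycleVec m 0 := by
  funext p
  simp only [cycleVec, ZMod.natCast_eq_natCast_iff']
  split_ifs <;> omega

lemma cycleVec_apply_self (ht : t < 2 * m - 1) : cycleVec m t ⟨t, by omega⟩ = 1 := by
  simp only [cycleVec]
  rw [← Nat.cast_one (R := ZMod 2), ZMod.natCast_eq_natCast_iff']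
  split_ifs <;> omega

lemma cycleVec_apply_last (ht : t < 2 * m - 1) : cycleVec m t ⟨2 * m - 1, by omega⟩ = 1 := by
  simp only [cycleVec, or_true, ↓reduceIte]
  rw [← Nat.cast_one (R := ZMod 2), ZMod.natCast_eq_natCast_iff']
  split_ifs <;> omega

end cycleVec

/-- for `n = 2m` with `m` odd, there is no sign function
`φ : F_2^n → {±1}` satisfying `φ(α) = -φ(β)` for `i` odd and `φ(α) = φ(β)` for
`i` even, where `α ⊕ β = e ⊕ e_i ⊕ e_n` (for all `α` with `α(i) = α(n) = 1`,
`1 ≤ i ≤ n-1`). -/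
theorem stmt16 (m n : ℕ) (hm : Odd m) (hm1 : 1 ≤ m) (hn : n = 2 * m) :
    ¬ ∃ f : (Fin n → ZMod 2) → ℤ,
      (∀ α, f α = 1 ∨ f α = -1) ∧
      (∀ (α : Fin n → ZMod 2) (i : Fin n), i.1 + 1 ≤ n - 1 →
        α i = 1 → α ⟨n - 1, by omega⟩ = 1 →
        ((Odd (i.1 + 1) →
            f α = - f (α + onesF n + unitF n i + unitF n ⟨n - 1, by omega⟩))
         ∧ (Even (i.1 + 1) →
            f α = f (α + onesF n + unitF n i + unitF n ⟨n - 1, by omega⟩)))) := by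
  subst hn
  rintro ⟨f, hsign, hrel⟩
  have hstep : ∀ t < 2 * m - 1,
      f (cycleVec m t) = (-1) ^ (t + 1) * f (cycleVec m (t + 1)) := by
    intro t ht
    obtain ⟨hodd, heven⟩ := hrel (cycleVec m t) ⟨t, by omega⟩ (by simp only; omega)
      (cycleVec_apply_self ht) (cycleVec_apply_last ht)
    rw [cycleVec_succ ht]
    exact eq_neg_one_pow_mul_of_parity (t + 1) hodd heven
  have hloop := eq_prod_mul_of_forall_lt_eq_mul (fun t => f (cycleVec m t)) _ _ hstep
  rw [prod_range_neg_one_pow_succ_of_odd hm, cycleVec_cycle] at hloop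
  rcases hsign (cycleVec m 0) with h | h <;> omega
end
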